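/- arXiv:1210.6749 — 2 statements merged into one kernel-verified Lean document; each statement's English description precedes it below -/
import Mathlib

section
/- Let p > 1. Then for all x ∈ (0, π_p/2), p·sin_p(x)/x + tan_p(x)/x > 1 + p. -/
open Real Set Filter Topology

/-- Generalized inverse sine: `arcsin_p x = ∫₀ˣ (1 - tᵖ)^(-1/p) dt`. -/
noncomputable def arcsinp (p : ℝ) (x : ℝ) : ℝ := ∫ t in (0:ℝ)..x, (1 - t ^ p) ^ (-1 / p)

/-- Generalized π: `π_p = 2 · arcsin_p 1`. -/
noncomputable def pip (p : ℝ) : ℝ := 2 * arcsinp p 1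

/-- Generalized sine: the inverse of `arcsinp p` (as a map from `[0,1]`). -/
noncomputable def sinp (p : ℝ) : ℝ → ℝ := Function.invFunOn (arcsinp p) (Set.Icc 0 1)

/-- Generalized cosine. -/
noncomputable def cosp (p : ℝ) (x : ℝ) : ℝ := (1 - (sinp p x) ^ p) ^ (1 / p)

/-- Generalized tangent. -/
noncomputable def tanp (p : ℝ) (x : ℝ) : ℝ := sinp p x / cosp p x

/-- Generalized inverse hyperbolic sine: `arsinh_p x = ∫₀ˣ (1 + tᵖ)^(-1/p) dt`. -/
noncomputable def arsinhp (p : ℝ) (x : ℝ) : ℝ := ∫ t in (0:ℝ)..x, (1 + t ^ p) ^ (-1 / p)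

/-- Generalized hyperbolic sine: the inverse of `arsinhp p` (as a map from `[0,∞)`). -/
noncomputable def sinhp (p : ℝ) : ℝ → ℝ := Function.invFunOn (arsinhp p) (Set.Ici 0)

/-- Generalized hyperbolic cosine. -/
noncomputable def coshp (p : ℝ) (x : ℝ) : ℝ := (1 + (sinhp p x) ^ p) ^ (1 / p)

/-- Generalized hyperbolic tangent. -/
noncomputable def tanhp (p : ℝ) (x : ℝ) : ℝ := sinhp p x / coshp p x
/-!
Put `s = sin_p x`, so that `x = arcsin_p s` and `tan_p x = s (1 - s^p)^(-1/p)`; the claim becomes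
`(1 + p) arcsin_p s < p s + s (1 - s^p)^(-1/p)` for `0 < s < 1`. Both sides vanish at `s = 0`, and
with `w = (1 - s^p)^(-1/p) > 1` the derivative of the difference is `w^(p+1) - (p+1) w + p`, which
is positive by Bernoulli's inequality.
-/

open MeasureTheory

section

variable {p t : ℝ}

lemma continuousAt_arcsinp_integrand (hp : 0 < p) (ht₀ : 0 ≤ t) (ht₁ : t < 1) :
    ContinuousAt (fun u : ℝ => (1 - u ^ p) ^ (-1 / p)) t := by
  have hne : 1 - t ^ p ≠ 0 := (sub_pos.2 (rpow_lt_one ht₀ ht₁ hp)).ne'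
  exact (continuousAt_const.sub (continuousAt_rpow_const t p (Or.inr hp.le))).rpow_const
    (Or.inl hne)

lemma intervalIntegrable_arcsinp_integrand (hp : 0 < p) {b : ℝ} (hb₀ : 0 ≤ b)
    (hb₁ : b < 1) :
    IntervalIntegrable (fun u : ℝ => (1 - u ^ p) ^ (-1 / p)) volume 0 b :=
  ContinuousOn.intervalIntegrable fun u hu => by
    rw [uIcc_of_le hb₀] at hu
    exact (continuousAt_arcsinp_integrand hp hu.1 (hu.2.trans_lt hb₁)).continuousWithinAt

/-- The singularity at `1` is dominated by `(1 - u)^(-1/p)`, integrable because `1/p < 1`. -/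
lemma intervalIntegrable_arcsinp_integrand_one (hp : 1 < p) :
    IntervalIntegrable (fun u : ℝ => (1 - u ^ p) ^ (-1 / p)) volume 0 1 := by
  have hp₀ : 0 < p := one_pos.trans hp
  have hdom : IntervalIntegrable (fun u : ℝ => (1 - u) ^ (-1 / p)) volume 0 1 := by
    have h : IntervalIntegrable (fun u : ℝ => u ^ (-1 / p)) volume 0 1 :=
      intervalIntegral.intervalIntegrable_rpow' (by
        rw [neg_div, neg_lt_neg_iff, div_lt_one hp₀]; exact hp)
    simpa only [sub_zero, sub_self] using (h.comp_sub_left 1).symm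
  refine hdom.mono_fun ((measurable_const.sub (measurable_id.pow_const p)).pow_const _
    |>.aestronglyMeasurable) ?_
  refine (ae_restrict_iff' measurableSet_uIoc).2 (Eventually.of_forall fun u hu => ?_)
  rw [uIoc_of_le zero_le_one] at hu
  dsimp only
  have hup : u ^ p ≤ u := by
    simpa using rpow_le_rpow_of_exponent_ge hu.1 hu.2 hp.le
  have hup₁ : u ^ p ≤ 1 := hup.trans hu.2
  rw [norm_of_nonneg (rpow_nonneg (sub_nonneg.2 hup₁) _),
    norm_of_nonneg (rpow_nonneg (sub_nonneg.2 hu.2) _)]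
  rcases hu.2.eq_or_lt with rfl | hu₁
  · simp [zero_rpow (div_ne_zero (neg_ne_zero.2 one_ne_zero) hp₀.ne')]
  · exact rpow_le_rpow_of_nonpos (sub_pos.2 hu₁) (by linarith)
      (div_nonpos_of_nonpos_of_nonneg (by norm_num) hp₀.le)

lemma arcsinp_zero : arcsinp p 0 = 0 :=
  intervalIntegral.integral_same

lemma continuousOn_arcsinp_of_intervalIntegrable {b : ℝ} (hb : 0 ≤ b)
    (h : IntervalIntegrable (fun u : ℝ => (1 - u ^ p) ^ (-1 / p)) volume 0 b) :
    ContinuousOn (arcsinp p) (Icc 0 b) := by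
  have h' := intervalIntegral.continuousOn_primitive_interval' h left_mem_uIcc
  rwa [uIcc_of_le hb] at h'

lemma hasDerivAt_arcsinp (hp : 0 < p) (ht₀ : 0 < t) (ht₁ : t < 1) :
    HasDerivAt (arcsinp p) ((1 - t ^ p) ^ (-1 / p)) t :=
  intervalIntegral.integral_hasDerivAt_right (intervalIntegrable_arcsinp_integrand hp ht₀.le ht₁)
    (ContinuousOn.stronglyMeasurableAtFilter isOpen_Ioo
      (fun _ hu => (continuousAt_arcsinp_integrand hp hu.1.le hu.2).continuousWithinAt)
      t ⟨ht₀, ht₁⟩)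
    (continuousAt_arcsinp_integrand hp ht₀.le ht₁)

/-- The derivative of `tan_p ∘ arcsin_p`. -/
lemma hasDerivAt_mul_one_sub_rpow (hp : 0 < p) (ht₀ : 0 < t) (ht₁ : t < 1) :
    HasDerivAt (fun u : ℝ => u * (1 - u ^ p) ^ (-1 / p)) ((1 - t ^ p) ^ (-1 / p - 1)) t := by
  have hc : 0 < 1 - t ^ p := sub_pos.2 (rpow_lt_one ht₀.le ht₁ hp)
  refine ((hasDerivAt_id' t).mul
    (((hasDerivAt_rpow_const (p := p) (Or.inl ht₀.ne')).const_sub 1).rpow_const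
      (p := -1 / p) (Or.inl hc.ne'))).congr_deriv ?_
  have htp : t * t ^ (p - 1) = t ^ p := by
    rw [← rpow_one_add' ht₀.le (by linarith)]; ring_nf
  rw [rpow_sub_one hc.ne']
  field_simp
  linear_combination htp

lemma one_add_mul_rpow_lt (hp : 0 < p) {c : ℝ} (hc₀ : 0 < c) (hc₁ : c < 1) :
    (1 + p) * c ^ (-1 / p) < p + c ^ (-1 / p - 1) := by
  set w := c ^ (-1 / p)
  have hw : 1 < w :=
    one_lt_rpow_of_pos_of_lt_one_of_neg hc₀ hc₁ (div_neg_of_neg_of_pos (by norm_num) hp)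
  have hpow : c ^ (-1 / p - 1) = w ^ (p + 1) := by
    rw [← rpow_mul hc₀.le]; congr 1; field_simp; ring
  have hbern := one_add_mul_self_lt_rpow_one_add (s := w - 1) (by linarith) (by linarith)
    (show 1 < p + 1 by linarith)
  rw [add_sub_cancel] at hbern
  linarith

lemma one_add_mul_arcsinp_lt (hp : 0 < p) {y : ℝ} (hy₀ : 0 < y) (hy₁ : y < 1) :
    (1 + p) * arcsinp p y < p * y + y * (1 - y ^ p) ^ (-1 / p) := by
  set G : ℝ → ℝ := fun t => p * t + t * (1 - t ^ p) ^ (-1 / p) - (1 + p) * arcsinp p t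
  have hG : StrictMonoOn G (Icc 0 y) := by
    refine strictMonoOn_of_deriv_pos (convex_Icc 0 y) ?_ fun t ht => ?_
    · have harc := continuousOn_arcsinp_of_intervalIntegrable hy₀.le
        (intervalIntegrable_arcsinp_integrand hp hy₀.le hy₁)
      have hint : ContinuousOn (fun u : ℝ => (1 - u ^ p) ^ (-1 / p)) (Icc 0 y) := fun u hu =>
        (continuousAt_arcsinp_integrand hp hu.1 (hu.2.trans_lt hy₁)).continuousWithinAt
      fun_prop
    · rw [interior_Icc] at ht
      have ht₁ := ht.2.trans hy₁
      have hc₁ : 1 - t ^ p < 1 := sub_lt_self 1 (rpow_pos_of_pos ht.1 p)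
      have hc₀ : 0 < 1 - t ^ p := sub_pos.2 (rpow_lt_one ht.1.le ht₁ hp)
      have hG' : HasDerivAt G
          (p * 1 + (1 - t ^ p) ^ (-1 / p - 1) - (1 + p) * (1 - t ^ p) ^ (-1 / p)) t :=
        (((hasDerivAt_id' t).const_mul p).add (hasDerivAt_mul_one_sub_rpow hp ht.1 ht₁)).sub
          ((hasDerivAt_arcsinp hp ht.1 ht₁).const_mul (1 + p))
      rw [hG'.deriv]
      linarith [one_add_mul_rpow_lt hp hc₀ hc₁]
  have hGy := hG (left_mem_Icc.2 hy₀.le) (right_mem_Icc.2 hy₀.le) hy₀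
  simp only [G, arcsinp_zero] at hGy
  linarith

lemma sinp_mem_Icc_and_arcsinp_sinp (hp : 1 < p) {x : ℝ} (hx₀ : 0 ≤ x)
    (hx : x ≤ pip p / 2) :
    sinp p x ∈ Icc 0 1 ∧ arcsinp p (sinp p x) = x := by
  have hex : ∃ s ∈ Icc (0 : ℝ) 1, arcsinp p s = x :=
    intermediate_value_Icc zero_le_one
      (continuousOn_arcsinp_of_intervalIntegrable zero_le_one
        (intervalIntegrable_arcsinp_integrand_one hp))
      ⟨by rwa [arcsinp_zero], by rwa [pip, mul_div_cancel_left₀ _ two_ne_zero] at hx⟩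
  exact ⟨Function.invFunOn_mem hex, Function.invFunOn_eq hex⟩

lemma tanp_eq_sinp_mul_rpow {x : ℝ} (hs : sinp p x ^ p ≤ 1) :
    tanp p x = sinp p x * (1 - sinp p x ^ p) ^ (-1 / p) := by
  rw [tanp, cosp, neg_div, rpow_neg (sub_nonneg.2 hs), div_eq_mul_inv]

end

theorem stmt8 (p : ℝ) (hp : 1 < p) :
    ∀ x ∈ Set.Ioo 0 (pip p / 2),
      p * (sinp p x / x) + tanp p x / x > 1 + p := by
  rintro x ⟨hx₀, hx⟩
  obtain ⟨⟨hs₀, hs₁⟩, hxs⟩ := sinp_mem_Icc_and_arcsinp_sinp hp hx₀.le hx.le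
  rw [tanp_eq_sinp_mul_rpow (rpow_le_one hs₀ hs₁ (by linarith)), gt_iff_lt, mul_div_assoc', ← add_div,
    lt_div_iff₀ hx₀]
  set s := sinp p x
  have hs_pos : 0 < s := hs₀.lt_of_ne <| by
    rintro hs; rw [← hs, arcsinp_zero] at hxs; linarith
  have hs_lt : s < 1 := hs₁.lt_of_ne <| by
    rintro hs; rw [hs] at hxs; rw [pip] at hx; linarith
  have key := one_add_mul_arcsinp_lt (one_pos.trans hp) hs_pos hs_lt
  rw [hxs] at key
  linarith
end

section
/- Let p > 1. Then for all x > 0, p·sinh_p(x)/x + tanh_p(x)/x > 1 + p. -/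
open Real Set Filter Topology

/-
With `s = sinh_p x` we have `x = arsinh_p s` and `tanh_p x = s (1 + s^p)^(-1/p)`, so the claim reads
`(1 + p) arsinh_p s < p s + s (1 + s^p)^(-1/p)` for `s > 0`. Both sides vanish at `s = 0`, and the
derivative of the difference is `p + c^(p+1) - (1 + p) c` with `c = (1 + s^p)^(-1/p) ∈ (0, 1)`,
which is positive by Bernoulli's inequality. That `sinh_p` really inverts `arsinh_p` on `[0, ∞)` follows
from `(1 + t^p)^(1/p) ≤ 1 + t`, which gives `arsinh_p s ≥ log (1 + s)`.
-/

section

variable {p : ℝ}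

lemma continuousOn_one_add_rpow_rpow (hp : 0 ≤ p) (q : ℝ) :
    ContinuousOn (fun t : ℝ => (1 + t ^ p) ^ q) (Ici 0) := by
  refine ContinuousOn.rpow_const (continuousOn_const.add fun t _ => ?_) fun t ht => ?_
  · exact (continuousAt_rpow_const t p (Or.inr hp)).continuousWithinAt
  · left
    have : 0 ≤ t ^ p := rpow_nonneg ht p
    positivity

lemma intervalIntegrable_arsinhp_integrand (hp : 0 ≤ p) {a b : ℝ} (ha : 0 ≤ a) (hb : 0 ≤ b) :
    IntervalIntegrable (fun t : ℝ => (1 + t ^ p) ^ (-1 / p)) MeasureTheory.volume a b :=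
  ((continuousOn_one_add_rpow_rpow hp _).mono fun _ ht =>
    le_trans (le_min ha hb) ht.1).intervalIntegrable

lemma arsinhp_zero (p : ℝ) : arsinhp p 0 = 0 := intervalIntegral.integral_same

lemma continuousOn_arsinhp (hp : 0 ≤ p) {b : ℝ} (hb : 0 ≤ b) :
    ContinuousOn (arsinhp p) (Icc 0 b) := by
  have hint : MeasureTheory.IntegrableOn (fun t : ℝ => (1 + t ^ p) ^ (-1 / p)) (uIcc 0 b) :=
    ((continuousOn_one_add_rpow_rpow hp _).mono fun _ ht => le_trans (le_min le_rfl hb) ht.1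
      ).integrableOn_compact isCompact_uIcc
  exact (intervalIntegral.continuousOn_primitive_interval hint).mono Icc_subset_uIcc

lemma hasDerivAt_arsinhp (hp : 0 ≤ p) {y : ℝ} (hy : 0 < y) :
    HasDerivAt (arsinhp p) ((1 + y ^ p) ^ (-1 / p)) y := by
  have hcont := continuousOn_one_add_rpow_rpow hp (-1 / p)
  refine intervalIntegral.integral_hasDerivAt_right
    (intervalIntegrable_arsinhp_integrand hp le_rfl hy.le) ?_ ?_
  · exact (hcont.mono (Ioi_subset_Ici le_rfl)).stronglyMeasurableAtFilter isOpen_Ioi y hy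
  · exact hcont.continuousAt (Ici_mem_nhds hy)

lemma log_one_add_le_arsinhp (hp : 1 ≤ p) {b : ℝ} (hb : 0 ≤ b) : log (1 + b) ≤ arsinhp p b := by
  have hlog : ∫ t in (0:ℝ)..b, (1 + t)⁻¹ = log (1 + b) := by
    rw [intervalIntegral.integral_comp_add_left (fun t => t⁻¹), add_zero,
      integral_inv_of_pos one_pos (by linarith), div_one]
  rw [← hlog, arsinhp]
  refine intervalIntegral.integral_mono_on hb ?_
    (intervalIntegrable_arsinhp_integrand (by linarith) le_rfl hb) fun t ht => ?_
  · refine ContinuousOn.intervalIntegrable_of_Icc hb ?_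
    exact ContinuousOn.inv₀ (f := fun t => 1 + t) (by fun_prop) fun t ht => by linarith [ht.1]
  · have hbase : 0 < 1 + t ^ p := by positivity [rpow_nonneg ht.1 p]
    have hnorm : (1 + t ^ p) ^ (1 / p) ≤ 1 + t := by
      simpa only [one_rpow] using rpow_add_rpow_le_add zero_le_one ht.1 hp
    rw [neg_div, rpow_neg hbase.le]
    exact inv_anti₀ (by positivity) hnorm

lemma exists_arsinhp_eq (hp : 1 ≤ p) {x : ℝ} (hx : 0 ≤ x) : ∃ s ∈ Ici 0, arsinhp p s = x := by
  have hb : 0 ≤ exp x - 1 := sub_nonneg.2 (one_le_exp hx)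
  have hxb : x ≤ arsinhp p (exp x - 1) := by
    simpa only [add_sub_cancel, log_exp] using log_one_add_le_arsinhp hp hb
  obtain ⟨s, hs, hsx⟩ := intermediate_value_Icc hb (continuousOn_arsinhp (by linarith) hb)
    ⟨by rwa [arsinhp_zero], hxb⟩
  exact ⟨s, hs.1, hsx⟩

lemma sinhp_nonneg (hp : 1 ≤ p) {x : ℝ} (hx : 0 ≤ x) : 0 ≤ sinhp p x :=
  Function.invFunOn_mem (exists_arsinhp_eq hp hx)

lemma arsinhp_sinhp (hp : 1 ≤ p) {x : ℝ} (hx : 0 ≤ x) : arsinhp p (sinhp p x) = x :=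
  Function.invFunOn_eq (exists_arsinhp_eq hp hx)

lemma sinhp_pos (hp : 1 ≤ p) {x : ℝ} (hx : 0 < x) : 0 < sinhp p x := by
  refine (sinhp_nonneg hp hx.le).lt_of_ne fun h => hx.ne ?_
  rw [← arsinhp_sinhp hp hx.le, ← h, arsinhp_zero]

lemma add_one_mul_lt_add_rpow_add_one (hp : 0 < p) {c : ℝ} (hc : 0 ≤ c) (hc1 : c ≠ 1) :
    (1 + p) * c < p + c ^ (p + 1) := by
  have h := one_add_mul_self_lt_rpow_one_add (s := c - 1) (by linarith) (sub_ne_zero.2 hc1)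
    (by linarith : 1 < p + 1)
  rw [add_sub_cancel] at h
  linarith

lemma add_one_mul_rpow_lt (hp : 0 < p) {u : ℝ} (hu : 1 < u) :
    (1 + p) * u ^ (-1 / p) < p + u ^ (-1 / p - 1) := by
  have hexp : -1 / p * (p + 1) = -1 / p - 1 := by field_simp; ring
  have hc1 : u ^ (-1 / p) < 1 :=
    rpow_lt_one_of_one_lt_of_neg hu (div_neg_of_neg_of_pos (by norm_num) hp)
  have h := add_one_mul_lt_add_rpow_add_one hp (rpow_nonneg (by linarith) (-1 / p)) hc1.ne
  rwa [← rpow_mul (by linarith), hexp] at h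

lemma hasDerivAt_mul_one_add_rpow (hp : 0 < p) {y : ℝ} (hy : 0 < y) :
    HasDerivAt (fun t => t * (1 + t ^ p) ^ (-1 / p)) ((1 + y ^ p) ^ (-1 / p - 1)) y := by
  have hu : 0 < 1 + y ^ p := by positivity
  refine ((hasDerivAt_id' y).mul
    (((hasDerivAt_rpow_const (p := p) (Or.inl hy.ne')).const_add 1).rpow_const (p := -1 / p)
      (Or.inl hu.ne'))).congr_deriv ?_
  rw [rpow_sub_one hu.ne', rpow_sub_one hy.ne']
  field_simp
  ring

lemma add_one_mul_arsinhp_lt (hp : 1 < p) {s : ℝ} (hs : 0 < s) :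
    (1 + p) * arsinhp p s < p * s + s * (1 + s ^ p) ^ (-1 / p) := by
  have hp0 : 0 < p := by linarith
  set g : ℝ → ℝ := fun y => p * y + y * (1 + y ^ p) ^ (-1 / p) - (1 + p) * arsinhp p y
  have hg0 : g 0 = 0 := by simp [g, arsinhp_zero, zero_rpow hp0.ne']
  have hcont : ContinuousOn g (Icc 0 s) := by
    refine ((continuousOn_const.mul continuousOn_id).add (continuousOn_id.mul ?_)).sub
      (continuousOn_const.mul (continuousOn_arsinhp hp0.le hs.le))
    exact (continuousOn_one_add_rpow_rpow hp0.le _).mono Icc_subset_Ici_self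
  have hderiv : ∀ y ∈ Ioo 0 s, HasDerivAt g
      (p + (1 + y ^ p) ^ (-1 / p - 1) - (1 + p) * (1 + y ^ p) ^ (-1 / p)) y := fun y hy =>
    (((hasDerivAt_id' y).const_mul p |>.congr_deriv (mul_one p)).add
      (hasDerivAt_mul_one_add_rpow hp0 hy.1)).sub ((hasDerivAt_arsinhp hp0.le hy.1).const_mul _)
  have hmono : StrictMonoOn g (Icc 0 s) := by
    refine strictMonoOn_of_hasDerivWithinAt_pos (convex_Icc 0 s) hcont
      (fun y hy => (hderiv y (by rwa [interior_Icc] at hy)).hasDerivWithinAt) fun y hy => ?_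
    rw [interior_Icc] at hy
    have hu : 1 < 1 + y ^ p := lt_add_of_pos_right 1 (rpow_pos_of_pos hy.1 p)
    linarith [add_one_mul_rpow_lt hp0 hu]
  have := hmono (left_mem_Icc.2 hs.le) (right_mem_Icc.2 hs.le) hs
  simp only [hg0, g] at this
  linarith

end

theorem stmt9 (p : ℝ) (hp : 1 < p) :
    ∀ x > (0:ℝ), p * (sinhp p x / x) + tanhp p x / x > 1 + p := by
  intro x hx
  set s := sinhp p x
  have hs : 0 < s := sinhp_pos hp.le hx
  have key := add_one_mul_arsinhp_lt hp hs
  rw [arsinhp_sinhp hp.le hx.le] at key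
  have htanh : tanhp p x = s * (1 + s ^ p) ^ (-1 / p) := by
    rw [tanhp, coshp, neg_div, rpow_neg (by positivity), div_eq_mul_inv, one_div]
  rw [gt_iff_lt, htanh, mul_div_assoc', ← add_div, lt_div_iff₀ hx]
  linarith
end
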